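/- Let E₃ be the elliptic curve over ℚ with affine Weierstrass equation y² = x(x − 1)(x − 1/5). Then E₃ has a quadratic twist of rank 0: there exists a nonzero rational number d such that every rational point of the quadratic twist E₃^(d), given by the affine Weierstrass equation y² = x(x − d)(x − d/5), has finite order in the group E₃^(d)(ℚ). -/

import Mathlib

/-!
Take `d = 5`: the twist is `y² = x(x - 1)(x - 5)`, and its only affine rational points are the
three points of order 2. Writing `x = m / e²` in lowest terms, a point with `y ≠ 0` makes `m` or
`m / 5` a square, which yields a primitive integral point with `z ≠ 0` on the quartic
`z² = (s² - e²)(s² - 5e²)`. Fermat descent excludes these: up to a common sign and a factor `4`,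
the two factors on the right are coprime squares. Congruences mod 8 rule out two of the four sign
and parity patterns; in the other two, a Pythagorean parametrisation followed by a second one, of
`(c² + d²)² + (cd)² = σ²`, produces a point with smaller `|e|`.
-/

theorem IsCoprime.of_linear_combinations {R : Type*} [CommRing R] {a b k x y : R}
    (hab : IsCoprime a b) (hk : IsCoprime x k) {c₁ c₂ c₃ c₄ : R}
    (h₁ : c₁ * x + c₂ * y = k * a) (h₂ : c₃ * x + c₄ * y = k * b) : IsCoprime x y := by
  obtain ⟨u, v, huv⟩ := hab
  obtain ⟨p, q, hpq⟩ := hk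
  exact ⟨p + q * (u * c₁ + v * c₃), q * (u * c₂ + v * c₄), by
    linear_combination hpq + q * u * h₁ + q * v * h₂ + q * k * huv⟩

theorem exists_eq_mul_of_mul_eq_mul {α : Type*} [CommMonoidWithZero α] [IsCancelMulZero α]
    [DecompositionMonoid α] {a b c d : α} (ha : a ≠ 0) (h : a * b = c * d) :
    ∃ p q r s, a = p * q ∧ b = r * s ∧ c = p * r ∧ d = q * s := by
  obtain ⟨p, q, ⟨r, rfl⟩, ⟨s, rfl⟩, rfl⟩ := exists_dvd_and_dvd_of_dvd_mul ⟨b, h.symm⟩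
  refine ⟨p, q, r, s, rfl, mul_left_cancel₀ ha ?_, rfl, rfl⟩
  rw [h, mul_mul_mul_comm]

namespace Int

theorem sq_emod_eight (x : ℤ) : x ^ 2 % 8 = 0 ∨ x ^ 2 % 8 = 1 ∨ x ^ 2 % 8 = 4 := by
  have h₀ := emod_nonneg x (by norm_num : (8 : ℤ) ≠ 0)
  have h₈ := emod_lt_of_pos x (by norm_num : (0 : ℤ) < 8)
  rw [sq, mul_emod]
  interval_cases x % 8 <;> simp

theorem exists_sq_of_isCoprime_of_mul_eq_sq {u v w : ℤ} (huv : IsCoprime u v)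
    (h : u * v = w ^ 2) (hw : w ≠ 0) :
    ∃ a b : ℤ, (u = a ^ 2 ∧ v = b ^ 2) ∨ (u = -a ^ 2 ∧ v = -b ^ 2) := by
  have hw₂ := pow_pos (abs_pos.mpr hw) 2
  rw [sq_abs] at hw₂
  obtain ⟨a, rfl | rfl⟩ := sq_of_isCoprime huv h <;>
    obtain ⟨b, rfl | rfl⟩ := sq_of_isCoprime huv.symm (by rw [mul_comm, h])
  · exact ⟨a, b, .inl ⟨rfl, rfl⟩⟩
  · nlinarith [sq_nonneg (a * b)]
  · nlinarith [sq_nonneg (a * b)]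
  · exact ⟨a, b, .inr ⟨rfl, rfl⟩⟩

theorem exists_of_sq_add_four_mul_sq_eq_sq {p q r : ℤ} (hp : Odd p) (hpq : IsCoprime p q)
    (h : p ^ 2 + 4 * q ^ 2 = r ^ 2) :
    ∃ m n : ℤ, IsCoprime m n ∧ (Even m ∧ Odd n ∨ Odd m ∧ Even n) ∧
      p = m ^ 2 - n ^ 2 ∧ q = m * n ∧ r ^ 2 = (m ^ 2 + n ^ 2) ^ 2 := by
  have hr : r ≠ 0 := by
    rintro rfl
    have : p ^ 2 = 0 := by nlinarith [sq_nonneg p, sq_nonneg q]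
    simp_all
  have hT : PythagoreanTriple p (2 * q) |r| := by
    rw [PythagoreanTriple, abs_mul_abs_self]
    linear_combination h
  have hgcd : p.gcd (2 * q) = 1 :=
    isCoprime_iff_gcd_eq_one.mp ((isCoprime_two_right.mpr hp).mul_right hpq)
  obtain ⟨m, n, hpmn, hqmn, hrmn, hmn, hpar, -⟩ :=
    hT.coprime_classification' hgcd (odd_iff.mp hp) (abs_pos.mpr hr)
  refine ⟨m, n, isCoprime_iff_gcd_eq_one.mpr hmn, ?_, hpmn, by linarith, by rw [← hrmn, sq_abs]⟩
  simpa only [even_iff, odd_iff] using hpar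

end Int

theorem Rat.exists_eq_div_sq_of_sq_eq_cubic {a b c : ℤ} {x y : ℚ}
    (h : y ^ 2 = x ^ 3 + a * x ^ 2 + b * x + c) :
    ∃ m n e : ℤ, e ≠ 0 ∧ IsCoprime m e ∧ x = m / e ^ 2 ∧ y = n / e ^ 3 := by
  obtain ⟨N, D, hD, hND, rfl⟩ : ∃ N D : ℤ, 0 < D ∧ IsCoprime N D ∧ x = N / D :=
    ⟨x.num, x.den, by positivity, Int.isCoprime_iff_gcd_eq_one.mpr x.reduced, (x.num_div_den).symm⟩
  obtain ⟨r, S, hS, hrS, rfl⟩ : ∃ r S : ℤ, 0 < S ∧ IsCoprime r S ∧ y = r / S :=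
    ⟨y.num, y.den, by positivity, Int.isCoprime_iff_gcd_eq_one.mpr y.reduced, (y.num_div_den).symm⟩
  have key : r ^ 2 * D ^ 3 = S ^ 2 * (N ^ 3 + D * (a * N ^ 2 + b * N * D + c * D ^ 2)) := by
    have hD' : (D : ℚ) ≠ 0 := by positivity
    have hS' : (S : ℚ) ≠ 0 := by positivity
    field_simp at h
    exact_mod_cast (by linear_combination h :
      (r : ℚ) ^ 2 * D ^ 3 = S ^ 2 * (N ^ 3 + D * (a * N ^ 2 + b * N * D + c * D ^ 2)))
  have hSD : S ^ 2 = D ^ 3 := Int.dvd_antisymm (by positivity) (by positivity)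
    ((hrS.symm.pow (m := 2) (n := 2)).dvd_of_dvd_mul_left ⟨_, key⟩)
    ((hND.pow_left.add_mul_left_left _).symm.pow_left.dvd_of_dvd_mul_right
      ⟨r ^ 2, by rw [← key]; ring⟩)
  obtain ⟨E, rfl⟩ : D ∣ S := (Int.pow_dvd_pow_iff two_ne_zero).mp ⟨D, by rw [hSD]; ring⟩
  have hE : E ^ 2 = D := mul_left_cancel₀ (pow_ne_zero 2 hD.ne') (by linear_combination hSD)
  subst hE
  refine ⟨N, r, E, by rintro rfl; simp at hD, (IsCoprime.pow_right_iff two_pos).mp hND,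
    by push_cast; rfl, by push_cast; ring⟩

namespace E3Twist

def QuarticPoint (s e z : ℤ) : Prop :=
  IsCoprime s e ∧ e ≠ 0 ∧ z ≠ 0 ∧ z ^ 2 = (s ^ 2 - e ^ 2) * (s ^ 2 - 5 * e ^ 2)

theorem exists_quarticPoint_of_four_factors {α β γ δ : ℤ} (hne : α * β * γ * δ ≠ 0)
    (h₁ : IsCoprime (α * β) (γ * δ)) (h₂ : IsCoprime (α * γ) (β * δ))
    (h : β ^ 2 * (α ^ 2 + δ ^ 2) = γ ^ 2 * (α ^ 2 - 4 * δ ^ 2)) :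
    ∃ s e z, QuarticPoint s e z ∧ e.natAbs ≤ (α * β * γ * δ).natAbs := by
  simp only [mul_ne_zero_iff] at hne
  obtain ⟨⟨⟨hα, hβ⟩, hγ⟩, hδ⟩ := hne
  obtain ⟨H, hH⟩ : γ ^ 2 ∣ α ^ 2 + δ ^ 2 :=
    (IsCoprime.pow (h₁.of_mul_left_right.of_mul_right_left).symm).dvd_of_dvd_mul_left ⟨_, h⟩
  have hH' : α ^ 2 - 4 * δ ^ 2 = β ^ 2 * H :=
    mul_left_cancel₀ (pow_ne_zero 2 hγ) (by linear_combination -h + β ^ 2 * hH)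
  have hH5 : H ∣ 5 := by
    obtain ⟨u, v, huv⟩ := IsCoprime.pow (m := 2) (n := 2) h₁.of_mul_left_left.of_mul_right_right
    exact ⟨u * (4 * γ ^ 2 + β ^ 2) + v * (γ ^ 2 - β ^ 2), by
      linear_combination (-5) * huv + (4 * u + v) * hH + (u - v) * hH'⟩
  have hHpos : 0 < H :=
    pos_of_mul_pos_right (hH ▸ by positivity : 0 < γ ^ 2 * H) (sq_nonneg γ)
  have hH15 : H = 1 ∨ H = 5 := by
    have := Int.le_of_dvd (by norm_num) hH5
    interval_cases H <;> omega
  rcases hH15 with rfl | rfl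
  · refine ⟨γ, δ, α * β, ⟨h₂.of_mul_left_right.of_mul_right_right, hδ, mul_ne_zero hα hβ, ?_⟩, ?_⟩
    · linear_combination (γ ^ 2 - δ ^ 2 + β ^ 2) * hH - (γ ^ 2 - δ ^ 2) * hH'
    · exact Int.natAbs_le_of_dvd_ne_zero (Dvd.intro_left _ rfl) (by simp_all)
  · have hαβγ : α ^ 2 - β ^ 2 = 4 * γ ^ 2 := by
      have : 5 * (α ^ 2 - β ^ 2) = 5 * (4 * γ ^ 2) := by linear_combination 4 * hH + hH'
      omega
    refine ⟨α, β, 4 * (γ * δ), ⟨h₂.of_mul_left_left.of_mul_right_left, hβ,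
      by simp [hγ, hδ], ?_⟩, ?_⟩
    · linear_combination -(α ^ 2 - 5 * β ^ 2) * hαβγ - 4 * γ ^ 2 * hH'
    · exact Int.natAbs_le_of_dvd_ne_zero ⟨α * γ * δ, by ring⟩ (by simp_all)

theorem exists_quarticPoint_of_sq_eq_biquadratic {c d σ : ℤ} (hc : Odd c) (hd : Even d)
    (hd₀ : d ≠ 0) (hcd : IsCoprime c d) (h : σ ^ 2 = c ^ 4 + 3 * c ^ 2 * d ^ 2 + d ^ 4) :
    ∃ s e z, QuarticPoint s e z ∧ 2 * e.natAbs ≤ (c * d).natAbs := by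
  obtain ⟨d, rfl⟩ := even_iff_two_dvd.mp hd
  have hc₀ : c ≠ 0 := by rintro rfl; simp at hc
  have hcd' : IsCoprime c d := hcd.of_mul_right_right
  have hodd : Odd (c ^ 2 + 4 * d ^ 2) := hc.pow.add_even ⟨2 * d ^ 2, by ring⟩
  have hcop : IsCoprime (c ^ 2 + 4 * d ^ 2) (c * d) := by
    refine IsCoprime.mul_right ?_ ?_
    · have h₄ : IsCoprime (2 ^ 2 * d ^ 2) c :=
        (Int.isCoprime_two_left.mpr hc).pow_left.mul_left (hcd'.symm.pow_left (m := 2))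
      rw [show c ^ 2 + 4 * d ^ 2 = 2 ^ 2 * d ^ 2 + c * c by ring]
      exact h₄.add_mul_left_left c
    · rw [show c ^ 2 + 4 * d ^ 2 = c ^ 2 + d * (4 * d) by ring]
      exact (hcd'.pow_left (m := 2)).add_mul_left_left _
  -- `(c² + 4d², 2cd, σ)` is a primitive Pythagorean triple; splitting `cd = mn` into four
  -- factors gives the new point
  obtain ⟨m, n, hmn, -, hp, hq, -⟩ :=
    Int.exists_of_sq_add_four_mul_sq_eq_sq hodd hcop (r := σ) (by linear_combination -h)
  obtain ⟨α, β, γ, δ, rfl, rfl, rfl, rfl⟩ := exists_eq_mul_of_mul_eq_mul hc₀ hq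
  obtain ⟨s, e, z, hP, he⟩ := exists_quarticPoint_of_four_factors
    (by simp_all) hcd' hmn (by linear_combination hp)
  refine ⟨s, e, z, hP, ?_⟩
  rw [show α * β * (2 * (γ * δ)) = 2 * (α * β * γ * δ) by ring, Int.natAbs_mul]
  simpa using Nat.mul_le_mul_left 2 he

theorem exists_quarticPoint_of_pythagorean {p q r σ : ℤ} (hp : Odd p) (hpq : IsCoprime p q)
    (hq : q ≠ 0) (h₁ : p ^ 2 + 4 * q ^ 2 = r ^ 2) (h₂ : σ ^ 2 = r ^ 2 + q ^ 2) :
    ∃ s e z, QuarticPoint s e z ∧ 2 * e.natAbs ≤ q.natAbs := by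
  obtain ⟨m, n, hmn, hpar, -, rfl, hr⟩ := Int.exists_of_sq_add_four_mul_sq_eq_sq hp hpq h₁
  have hσ : σ ^ 2 = m ^ 4 + 3 * m ^ 2 * n ^ 2 + n ^ 4 := by rw [h₂, hr]; ring
  rcases hpar with ⟨hm, hn⟩ | ⟨hm, hn⟩
  · rw [mul_comm]
    exact exists_quarticPoint_of_sq_eq_biquadratic hn hm (left_ne_zero_of_mul hq) hmn.symm
      (by rw [hσ]; ring)
  · exact exists_quarticPoint_of_sq_eq_biquadratic hm hn (right_ne_zero_of_mul hq) hmn hσ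

namespace QuarticPoint

variable {s e z : ℤ}

theorem exists_natAbs_lt_of_odd_sub (hP : QuarticPoint s e z) (hA : Odd (s ^ 2 - e ^ 2)) :
    ∃ s' e' z', QuarticPoint s' e' z' ∧ e'.natAbs < e.natAbs := by
  obtain ⟨hse, he, hz, h⟩ := hP
  have hAB : IsCoprime (s ^ 2 - e ^ 2) (s ^ 2 - 5 * e ^ 2) :=
    (hse.symm.pow (m := 2) (n := 2)).of_linear_combinations
      ((Int.isCoprime_two_right.mpr hA).pow_right (n := 2))
      (c₁ := 1) (c₂ := -1) (c₃ := 5) (c₄ := -1) (by ring) (by ring)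
  have hA₂ := Int.odd_iff.mp hA
  obtain ⟨a, b, ⟨ha, hb⟩ | ⟨ha, hb⟩⟩ := Int.exists_sq_of_isCoprime_of_mul_eq_sq hAB h.symm hz
  · have hb₂ : Odd b := (Int.odd_pow' two_ne_zero).mp (Int.odd_iff.mpr (by omega))
    have hbe : IsCoprime b e := by
      rw [← IsCoprime.pow_left_iff two_pos, ← hb,
        show s ^ 2 - 5 * e ^ 2 = s ^ 2 + e * (-5 * e) by ring]
      exact (hse.pow_left).add_mul_left_left _
    obtain ⟨s', e', z', hP', hle⟩ :=
      exists_quarticPoint_of_pythagorean hb₂ hbe he (r := a) (σ := s)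
        (by linear_combination ha - hb) (by linear_combination ha)
    exact ⟨s', e', z', hP', by have := Int.natAbs_pos.mpr he; omega⟩
  · -- `a² + s² = e²` and `b² + s² = 5e²` with `s² - e²` odd have no solution mod 8
    have := Int.sq_emod_eight s
    have := Int.sq_emod_eight e
    have := Int.sq_emod_eight a
    have := Int.sq_emod_eight b
    omega

theorem exists_natAbs_lt_of_odd_of_odd (hP : QuarticPoint s e z) (hs : Odd s) (he : Odd e) :
    ∃ s' e' z', QuarticPoint s' e' z' ∧ e'.natAbs < e.natAbs := by
  obtain ⟨hse, -, hz, h⟩ := hP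
  have hs₂ := Int.odd_iff.mp (hs.pow (n := 2))
  have he₂ := Int.odd_iff.mp (he.pow (n := 2))
  have hs₈ := Int.sq_emod_eight s
  have he₈ := Int.sq_emod_eight e
  obtain ⟨X, hX⟩ : (4 : ℤ) ∣ s ^ 2 - e ^ 2 := by omega
  obtain ⟨Y, hY⟩ : (4 : ℤ) ∣ s ^ 2 - 5 * e ^ 2 := by omega
  obtain ⟨w, rfl⟩ : (4 : ℤ) ∣ z := by
    rw [← Int.pow_dvd_pow_iff two_ne_zero, h, hX, hY]
    exact ⟨X * Y, by ring⟩
  have hw : X * Y = w ^ 2 := by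
    have : 16 * (X * Y) = 16 * w ^ 2 := by
      linear_combination -h - (s ^ 2 - 5 * e ^ 2) * hX - 4 * X * hY
    omega
  have hXY : IsCoprime X Y :=
    (hse.symm.pow (m := 2) (n := 2)).of_linear_combinations isCoprime_one_right
      (c₁ := 1) (c₂ := -1) (c₃ := 5) (c₄ := -1) (by omega) (by omega)
  obtain ⟨a, b, ⟨rfl, rfl⟩ | ⟨rfl, rfl⟩⟩ :=
    Int.exists_sq_of_isCoprime_of_mul_eq_sq hXY hw (by rintro rfl; simp at hz)
  · -- `b² + e² = a²` with `b`, `e` odd is impossible mod 8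
    have := Int.sq_emod_eight a
    have := Int.sq_emod_eight b
    omega
  · have hsa : IsCoprime s a := by
      have h' := hse.pow_right (n := 2)
      rw [show e ^ 2 = 4 * a ^ 2 + s * s by linear_combination -hX,
        IsCoprime.add_mul_left_right_iff] at h'
      exact (IsCoprime.pow_right_iff two_pos).mp h'.of_mul_right_right
    have ha : a ≠ 0 := by
      rintro rfl
      simp_all
    obtain ⟨s', e', z', hP', hle⟩ :=
      exists_quarticPoint_of_pythagorean hs hsa ha (r := e) (σ := b)
        (by linear_combination hX) (by omega)
    have ha₂ : 0 < a ^ 2 := by positivity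
    have hae : a.natAbs < e.natAbs := Int.natAbs_lt_iff_sq_lt.mpr (by nlinarith [sq_nonneg s])
    exact ⟨s', e', z', hP', by omega⟩

theorem exists_natAbs_lt (hP : QuarticPoint s e z) :
    ∃ s' e' z', QuarticPoint s' e' z' ∧ e'.natAbs < e.natAbs := by
  rcases Int.even_or_odd s with hs | hs <;> rcases Int.even_or_odd e with he | he
  · exact absurd (hP.1.isUnit_of_dvd' hs.two_dvd he.two_dvd) Int.prime_two.not_isUnit
  · exact hP.exists_natAbs_lt_of_odd_sub ((hs.pow_of_ne_zero two_ne_zero).sub_odd he.pow)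
  · exact hP.exists_natAbs_lt_of_odd_sub (hs.pow.sub_even (he.pow_of_ne_zero two_ne_zero))
  · exact hP.exists_natAbs_lt_of_odd_of_odd hs he

end QuarticPoint

theorem not_quarticPoint (s e z : ℤ) : ¬ QuarticPoint s e z := by
  induction hN : e.natAbs using Nat.strong_induction_on generalizing s e z with
  | _ N ih =>
    intro hP
    obtain ⟨s', e', z', hP', hlt⟩ := hP.exists_natAbs_lt
    exact ih _ (hN ▸ hlt) s' e' z' rfl hP'

theorem eq_zero_of_sq_eq_cubic {m e n : ℤ} (hme : IsCoprime m e) (he : e ≠ 0)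
    (h : n ^ 2 = m * (m - e ^ 2) * (m - 5 * e ^ 2)) : n = 0 := by
  by_contra hn
  have he₂ : 0 < e ^ 2 := by positivity
  have h5 : Prime (5 : ℤ) := Int.prime_iff_natAbs_prime.mpr (by norm_num)
  by_cases h5m : (5 : ℤ) ∣ m
  · obtain ⟨m, rfl⟩ := h5m
    obtain ⟨n, rfl⟩ : (5 : ℤ) ∣ n := h5.dvd_of_dvd_pow (n := 2)
      ⟨m * (5 * m - e ^ 2) * (5 * m - 5 * e ^ 2), by linear_combination h⟩
    have h' : m * ((e ^ 2 - m * 1) * (e ^ 2 - m * 5)) = n ^ 2 := by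
      have : 25 * (m * ((e ^ 2 - m * 1) * (e ^ 2 - m * 5))) = 25 * n ^ 2 := by
        linear_combination -h
      omega
    have hme' : IsCoprime m (e ^ 2) := hme.of_mul_left_right.pow_right
    obtain ⟨t, w, ⟨rfl, hw⟩ | ⟨rfl, hw⟩⟩ := Int.exists_sq_of_isCoprime_of_mul_eq_sq
      ((IsCoprime.sub_mul_left_right_iff.mpr hme').mul_right
        (IsCoprime.sub_mul_left_right_iff.mpr hme')) h' (by simpa using hn)
    · have hnt : n ^ 2 = (t * w) ^ 2 := by linear_combination -h' + t ^ 2 * hw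
      have htw : t * w ≠ 0 := fun h0 ↦ hn (by simpa [h0] using hnt)
      exact not_quarticPoint e t w ⟨((IsCoprime.pow_iff two_pos two_pos).mp hme').symm,
        left_ne_zero_of_mul htw, right_ne_zero_of_mul htw, by linear_combination -hw⟩
    · nlinarith [sq_nonneg t, sq_nonneg w]
  · have hm5 : IsCoprime m 5 := ((Prime.coprime_iff_not_dvd h5).mpr h5m).symm
    have hme' : IsCoprime m (e ^ 2) := hme.pow_right
    have h' : m * ((m * 1 - e ^ 2) * (m * 1 - 5 * e ^ 2)) = n ^ 2 := by linear_combination -h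
    obtain ⟨t, w, ⟨rfl, hw⟩ | ⟨rfl, hw⟩⟩ := Int.exists_sq_of_isCoprime_of_mul_eq_sq
      ((IsCoprime.mul_sub_left_right_iff.mpr hme').mul_right
        (IsCoprime.mul_sub_left_right_iff.mpr (hm5.mul_right hme'))) h' (by simpa using hn)
    · have hnt : n ^ 2 = (t * w) ^ 2 := by linear_combination -h' + t ^ 2 * hw
      have htw : t * w ≠ 0 := fun h0 ↦ hn (by simpa [h0] using hnt)
      exact not_quarticPoint t e w ⟨(IsCoprime.pow_left_iff two_pos).mp hme, he,
        right_ne_zero_of_mul htw, by linear_combination -hw⟩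
    · nlinarith [sq_nonneg t, sq_nonneg w]

theorem eq_zero_of_sq_eq {x y : ℚ} (h : y ^ 2 = x ^ 3 - 6 * x ^ 2 + 5 * x) : y = 0 := by
  obtain ⟨m, n, e, he, hme, rfl, rfl⟩ :=
    Rat.exists_eq_div_sq_of_sq_eq_cubic (a := -6) (b := 5) (c := 0) (x := x) (y := y)
      (by push_cast; linear_combination h)
  have he' : (e : ℚ) ≠ 0 := by exact_mod_cast he
  have hmn : n ^ 2 = m * (m - e ^ 2) * (m - 5 * e ^ 2) := by
    field_simp at h
    exact_mod_cast (by linear_combination h : (n : ℚ) ^ 2 = m * (m - e ^ 2) * (m - 5 * e ^ 2))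
  simp [eq_zero_of_sq_eq_cubic hme he hmn]

end E3Twist

/-- Corollary 4.2 of the paper: the elliptic curve `E₃ : y² = x(x − 1)(x − 1/5)` over
`ℚ` has a quadratic twist of rank `0`: there is a nonzero rational `d` such that every
rational point of the twist `E₃^(d) : y² = x(x − d)(x − d/5)`, i.e.
`y² = x³ − (d + d/5)x² + (d·d/5)x`, has finite order. -/
theorem E_three_has_twist_of_rank_zero :
    ∃ d : ℚ, d ≠ 0 ∧
      ∀ P : WeierstrassCurve.Affine.Point
          ({ a₁ := 0, a₂ := -(d + d / 5), a₃ := 0, a₄ := d * d / 5, a₆ := 0 } :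
            WeierstrassCurve.Affine ℚ),
        ∃ n : ℕ, 0 < n ∧ n • P = 0 := by
  refine ⟨5, by norm_num, fun P ↦ ⟨2, two_pos, ?_⟩⟩
  rw [two_smul]
  cases P with
  | zero => exact zero_add 0
  | @some x y h =>
    have hxy := (WeierstrassCurve.Affine.equation_iff x y).mp h.1
    have hy : y = 0 :=
      E3Twist.eq_zero_of_sq_eq (x := x) (by norm_num at hxy; linear_combination hxy)
    apply WeierstrassCurve.Affine.Point.add_self_of_Y_eq
    simp [hy, WeierstrassCurve.Affine.negY]
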